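/- Let x ≠ y in X and let B = B(x, d(x,y)) be the smallest ball containing both x and y. Then k(d(x,y)) = −λ(B)/m(B) + Σ_T ( 1/m(T) − 1/m(T⁺) )·λ(T⁺), where the sum ranges over all balls T of X with B ⊆ T ⊊ X; that is, the kernel matrix is determined by the eigenvalues λ(·) and the measure m. -/

import Mathlib

open scoped Classical
open Finset

/-- Closed ball of radius `r` around `x`, as a finset. -/
noncomputable def uball {X : Type*} [Fintype X] (d : X → X → ℝ) (x : X) (r : ℝ) : Finset X :=
  Finset.univ.filter fun y => d x y ≤ r

/-- A ball of the ultrametric space: a closed ball of nonnegative radius. -/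
def IsBall {X : Type*} [Fintype X] (d : X → X → ℝ) (B : Finset X) : Prop :=
  ∃ x r, 0 ≤ r ∧ B = uball d x r

/-- Diameter of a finite set: maximum of `d` over `B × B` (`0` if `B` is empty). -/
noncomputable def fdiam {X : Type*} [Fintype X] (d : X → X → ℝ) (B : Finset X) : ℝ :=
  if h : (B ×ˢ B).Nonempty then (B ×ˢ B).sup' h fun p => d p.1 p.2 else 0

/-- Mass of a set: `m(B) = Σ_{x ∈ B} m(x)`. -/
noncomputable def mass {X : Type*} [Fintype X] (m : X → ℝ) (B : Finset X) : ℝ :=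
  ∑ x ∈ B, m x

/-- The eigenvalue attached to a ball `B`, computed from a base point `x₀ ∈ B`:
`λ(B) = −(Σ_{y ∉ B} k(d(x₀,y))·m(y) + k(diam B)·m(B))`. -/
noncomputable def lamB {X : Type*} [Fintype X] [DecidableEq X]
    (d : X → X → ℝ) (k : ℝ → ℝ) (m : X → ℝ) (B : Finset X) (x₀ : X) : ℝ :=
  -((∑ y ∈ Bᶜ, k (d x₀ y) * m y) + k (fdiam d B) * mass m B)

/-- The parent radius of a ball `B ⊊ X` seen from `x ∈ B`: `r⁺ = min{d(x,y) : y ∉ B}`. -/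
noncomputable def parentR {X : Type*} [Fintype X] [DecidableEq X]
    (d : X → X → ℝ) (B : Finset X) (x : X) : ℝ :=
  if h : (Bᶜ : Finset X).Nonempty then Bᶜ.inf' h fun y => d x y else 0

/-- The parent ball `B⁺ = B(x, r⁺)` of `B ⊊ X`, computed from a base point `x ∈ B`. -/
noncomputable def parentB {X : Type*} [Fintype X] [DecidableEq X]
    (d : X → X → ℝ) (B : Finset X) (x : X) : Finset X :=
  uball d x (parentR d B x)

/-- The ultrametric Laplacian matrix:
`L x y = k(d(x,y))·m(y)` off the diagonal and `L x x = −Σ_{z ≠ x} k(d(x,z))·m(z)`. -/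
noncomputable def ultraLap {X : Type*} [Fintype X] [DecidableEq X]
    (d : X → X → ℝ) (k : ℝ → ℝ) (m : X → ℝ) : Matrix X X ℝ :=
  fun x y => if y = x then -(∑ z ∈ ({x}ᶜ : Finset X), k (d x z) * m z) else k (d x y) * m y

/-- The smallest ball containing `x` and `y` and having at least two elements:
`B(x, d(x,y))` for `x ≠ y`, and `B(x, min_{z ≠ x} d(x,z))` for `x = y`. -/
noncomputable def sball {X : Type*} [Fintype X] [DecidableEq X]
    (d : X → X → ℝ) (x y : X) : Finset X :=
  if x = y then
    (if h : (({x}ᶜ : Finset X)).Nonempty then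
      uball d x ((({x}ᶜ : Finset X)).inf' h fun z => d x z)
     else uball d x 0)
  else uball d x (d x y)

/-!
For a ball `B ∋ x` with parent `B⁺`, the points of `B⁺ \ B` all lie at distance `diam B⁺`
from `x`, so the eigenvalues of `B` and `B⁺` differ by exactly
`λ(B⁺) - λ(B) = (k(diam B) - k(diam B⁺))·m(B)`.
Solving for `k(diam B)` expresses it through `λ(B)`, `λ(B⁺)` and `k(diam B⁺)`; iterating up the
chain of balls `B ⊊ B⁺ ⊊ B⁺⁺ ⊊ ⋯ ⊊ X`, whose members are exactly the balls containing `B`,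
telescopes to the formula. At the top, `λ(X) = -k(diam X)·m(X)`.
-/

lemma dist_self_le_of_ultra {X : Type*} {d : X → X → ℝ} (hsymm : ∀ x y, d x y = d y x)
    (hultra : ∀ x y z, d x z ≤ max (d x y) (d y z)) (x y : X) : d x x ≤ d x y := by
  simpa [hsymm y x] using hultra x y x

section Ultrametric

variable {X : Type*} [Fintype X] {d : X → X → ℝ}

lemma mem_uball {x z : X} {r : ℝ} : z ∈ uball d x r ↔ d x z ≤ r := by
  simp [uball]

lemma uball_eq_of_mem (hsymm : ∀ x y, d x y = d y x)
    (hultra : ∀ x y z, d x z ≤ max (d x y) (d y z)) {c x : X} {r : ℝ}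
    (hx : x ∈ uball d c r) : uball d c r = uball d x r := by
  rw [mem_uball] at hx
  ext z
  simp only [mem_uball]
  constructor
  · intro h
    calc d x z ≤ max (d x c) (d c z) := hultra x c z
      _ ≤ r := max_le (hsymm x c ▸ hx) h
  · intro h
    calc d c z ≤ max (d c x) (d x z) := hultra c x z
      _ ≤ r := max_le hx h

lemma fdiam_uball (hsymm : ∀ x y, d x y = d y x)
    (hultra : ∀ x y z, d x z ≤ max (d x y) (d y z)) (x z : X) :
    fdiam d (uball d x (d x z)) = d x z := by
  have hxz : (x, z) ∈ uball d x (d x z) ×ˢ uball d x (d x z) :=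
    mem_product.2 ⟨mem_uball.2 (dist_self_le_of_ultra hsymm hultra x z), mem_uball.2 le_rfl⟩
  rw [fdiam, dif_pos ⟨_, hxz⟩]
  refine le_antisymm (sup'_le _ _ ?_) (le_sup' (fun p : X × X => d p.1 p.2) hxz)
  rintro ⟨a, b⟩ hab
  obtain ⟨ha, hb⟩ := mem_product.1 hab
  calc d a b ≤ max (d a x) (d x b) := hultra a x b
    _ ≤ d x z := max_le (hsymm a x ▸ mem_uball.1 ha) (mem_uball.1 hb)

lemma mass_pos {m : X → ℝ} (hm : ∀ x, 0 < m x) {B : Finset X} (hB : B.Nonempty) :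
    0 < mass m B :=
  sum_pos (fun i _ => hm i) hB

end Ultrametric

section Parent

variable {X : Type*} [Fintype X] [DecidableEq X] {d : X → X → ℝ}

lemma parentR_le {B : Finset X} {x y : X} (hy : y ∉ B) : parentR d B x ≤ d x y := by
  have hC : Bᶜ.Nonempty := ⟨y, mem_compl.2 hy⟩
  rw [parentR, dif_pos hC]
  exact inf'_le _ (mem_compl.2 hy)

lemma exists_not_mem_dist_eq_parentR {B : Finset X} (hB : B ≠ univ) (x : X) :
    ∃ z ∉ B, d x z = parentR d B x := by
  have hC : Bᶜ.Nonempty := by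
    rwa [nonempty_iff_ne_empty, Ne, compl_eq_empty_iff]
  obtain ⟨z, hz, hzx⟩ := exists_mem_eq_inf' hC fun y => d x y
  exact ⟨z, mem_compl.1 hz, by rw [parentR, dif_pos hC, hzx]⟩

lemma fdiam_parentB (hsymm : ∀ x y, d x y = d y x)
    (hultra : ∀ x y z, d x z ≤ max (d x y) (d y z)) {B : Finset X} (hB : B ≠ univ) (x : X) :
    fdiam d (parentB d B x) = parentR d B x := by
  obtain ⟨z, -, hz⟩ := exists_not_mem_dist_eq_parentR (d := d) hB x
  rw [parentB, ← hz]
  exact fdiam_uball hsymm hultra x z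

lemma lt_parentR {x : X} {r : ℝ} (hB : uball d x r ≠ univ) :
    r < parentR d (uball d x r) x := by
  obtain ⟨z, hzB, hz⟩ := exists_not_mem_dist_eq_parentR hB x
  rw [mem_uball, not_le] at hzB
  exact hz ▸ hzB

lemma uball_ssubset_parentB {x : X} {r : ℝ} (hB : uball d x r ≠ univ) :
    uball d x r ⊂ parentB d (uball d x r) x := by
  obtain ⟨z, hzB, hz⟩ := exists_not_mem_dist_eq_parentR hB x
  refine Finset.ssubset_iff_subset_ne.2 ⟨fun y hy => ?_, fun h => hzB ?_⟩
  · exact mem_uball.2 ((mem_uball.1 hy).trans (lt_parentR hB).le)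
  · exact h ▸ mem_uball.2 hz.le

lemma parentB_subset_of_ssubset {x : X} {r s : ℝ} (hT : uball d x r ⊂ uball d x s) :
    parentB d (uball d x r) x ⊆ uball d x s := by
  obtain ⟨w, hwT, hwB⟩ := exists_of_ssubset hT
  intro y hy
  exact mem_uball.2 ((mem_uball.1 hy).trans ((parentR_le hwB).trans (mem_uball.1 hwT)))

lemma dist_eq_parentR_of_mem_sdiff {B : Finset X} {x y : X} (hy : y ∈ parentB d B x \ B) :
    d x y = parentR d B x := by
  obtain ⟨hyP, hyB⟩ := mem_sdiff.1 hy
  exact le_antisymm (mem_uball.1 hyP) (parentR_le hyB)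

lemma lamB_parentB_sub_lamB (hsymm : ∀ x y, d x y = d y x)
    (hultra : ∀ x y z, d x z ≤ max (d x y) (d y z)) (k : ℝ → ℝ) (m : X → ℝ) {x : X} {r : ℝ}
    (hB : uball d x r ≠ univ) :
    lamB d k m (parentB d (uball d x r) x) x - lamB d k m (uball d x r) x =
      (k (fdiam d (uball d x r)) - k (parentR d (uball d x r) x)) * mass m (uball d x r) := by
  set B := uball d x r
  set P := parentB d B x
  have hBP : B ⊆ P := (uball_ssubset_parentB hB).subset
  have hshell : ∑ y ∈ P \ B, k (d x y) * m y = k (parentR d B x) * (mass m P - mass m B) := by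
    rw [sum_congr rfl fun y hy => by rw [dist_eq_parentR_of_mem_sdiff hy], ← mul_sum,
      mass, mass, ← sum_sdiff hBP]
    ring
  have hcompl : ∑ y ∈ Bᶜ, k (d x y) * m y =
      ∑ y ∈ P \ B, k (d x y) * m y + ∑ y ∈ Pᶜ, k (d x y) * m y := by
    rw [← compl_sdiff_compl, sum_sdiff (compl_subset_compl.2 hBP)]
  have hdiam : fdiam d P = parentR d B x := fdiam_parentB hsymm hultra hB x
  rw [lamB, lamB, hcompl, hshell, hdiam]
  ring

end Parent

section Eigenvalues

variable {X : Type*} [Fintype X] [DecidableEq X]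

noncomputable def ballEigenSum (d : X → X → ℝ) (k : ℝ → ℝ) (m : X → ℝ) (x : X)
    (B : Finset X) : ℝ :=
  ∑ T ∈ univ.filter (fun T : Finset X => IsBall d T ∧ B ⊆ T ∧ T ≠ univ),
    ((mass m T)⁻¹ - (mass m (parentB d T x))⁻¹) * lamB d k m (parentB d T x) x

variable {d : X → X → ℝ} {k : ℝ → ℝ} {m : X → ℝ}

lemma ballEigenSum_univ (x : X) : ballEigenSum d k m x univ = 0 := by
  refine sum_eq_zero fun T hT => ?_
  obtain ⟨-, hsub, hne⟩ := (mem_filter.1 hT).2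
  exact absurd (univ_subset_iff.1 hsub) hne

lemma ballEigenSum_uball (hsymm : ∀ x y, d x y = d y x)
    (hultra : ∀ x y z, d x z ≤ max (d x y) (d y z)) {x : X} {r : ℝ} (hr : 0 ≤ r)
    (hx : x ∈ uball d x r) (hB : uball d x r ≠ univ) :
    ballEigenSum d k m x (uball d x r) =
      ((mass m (uball d x r))⁻¹ - (mass m (parentB d (uball d x r) x))⁻¹) *
          lamB d k m (parentB d (uball d x r) x) x +
        ballEigenSum d k m x (parentB d (uball d x r) x) := by
  set B := uball d x r
  have hBP := uball_ssubset_parentB hB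
  have hsplit : univ.filter (fun T : Finset X => IsBall d T ∧ B ⊆ T ∧ T ≠ univ) =
      insert B (univ.filter fun T => IsBall d T ∧ parentB d B x ⊆ T ∧ T ≠ univ) := by
    ext T
    simp only [mem_insert, mem_filter, mem_univ, true_and]
    constructor
    · rintro ⟨hTball, hBT, hTne⟩
      refine (eq_or_ne T B).imp id fun hTB => ⟨hTball, ?_, hTne⟩
      obtain ⟨c, s, -, rfl⟩ := hTball
      have hT := uball_eq_of_mem hsymm hultra (hBT hx)
      rw [hT] at hBT hTB ⊢
      exact parentB_subset_of_ssubset (hBT.ssubset_of_ne hTB.symm)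
    · rintro (rfl | ⟨hTball, hPT, hTne⟩)
      · exact ⟨⟨x, r, hr, rfl⟩, subset_rfl, hB⟩
      · exact ⟨hTball, hBP.subset.trans hPT, hTne⟩
  have hBnot : B ∉ univ.filter fun T => IsBall d T ∧ parentB d B x ⊆ T ∧ T ≠ univ :=
    fun h => (not_subset_of_ssubset hBP) (mem_filter.1 h).2.2.1
  rw [ballEigenSum, hsplit, sum_insert hBnot]
  rfl

lemma eq_of_parent_step {kB kP lB lP mB mP S : ℝ} (hmB : mB ≠ 0) (hmP : mP ≠ 0)
    (hstep : lP - lB = (kB - kP) * mB) (hP : kP = -lP / mP + S) :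
    kB = -lB / mB + ((mB⁻¹ - mP⁻¹) * lP + S) := by
  have hkB : kB = (lP - lB) / mB + kP := by
    field_simp
    linarith
  rw [hkB, hP]
  field_simp
  ring

lemma kernel_fdiam_eq (hsymm : ∀ x y, d x y = d y x)
    (hultra : ∀ x y z, d x z ≤ max (d x y) (d y z)) (hm : ∀ x, 0 < m x) (x : X)
    (B : Finset X) (hball : IsBall d B) (hx : x ∈ B) :
    k (fdiam d B) = -lamB d k m B x / mass m B + ballEigenSum d k m x B := by
  induction B using WellFoundedGT.induction with
  | ind B ih =>
  have hmB : mass m B ≠ 0 := (mass_pos hm ⟨x, hx⟩).ne'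
  by_cases hB : B = univ
  · subst hB
    rw [ballEigenSum_univ, lamB, compl_univ, sum_empty]
    field_simp
    ring
  obtain ⟨c, r, hr, rfl⟩ := hball
  have hB' := uball_eq_of_mem hsymm hultra hx
  rw [hB'] at hx hB hmB ih ⊢
  have hBP := uball_ssubset_parentB hB
  have hP : IsBall d (parentB d (uball d x r) x) := ⟨x, _, hr.trans (lt_parentR hB).le, rfl⟩
  have hup := ih _ hBP hP (hBP.subset hx)
  rw [fdiam_parentB hsymm hultra hB] at hup
  rw [ballEigenSum_uball hsymm hultra hr hx hB]
  exact eq_of_parent_step hmB (mass_pos hm ⟨x, hBP.subset hx⟩).ne'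
    (lamB_parentB_sub_lamB hsymm hultra k m hB) hup

end Eigenvalues

theorem stmt12_general {X : Type*} [Fintype X] [DecidableEq X]
    (d : X → X → ℝ)
    (hd0 : ∀ x y, d x y = 0 ↔ x = y)
    (hsymm : ∀ x y, d x y = d y x)
    (hultra : ∀ x y z, d x z ≤ max (d x y) (d y z))
    (m : X → ℝ) (hm : ∀ x, 0 < m x) (k : ℝ → ℝ)
    (x y : X) :
    k (d x y) =
      -(lamB d k m (uball d x (d x y)) x) / mass m (uball d x (d x y)) +
      ∑ T ∈ Finset.univ.filter
          (fun T : Finset X => IsBall d T ∧ uball d x (d x y) ⊆ T ∧ T ≠ Finset.univ),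
        ((mass m T)⁻¹ - (mass m (parentB d T x))⁻¹) * lamB d k m (parentB d T x) x := by
  have hxB : x ∈ uball d x (d x y) := mem_uball.2 (dist_self_le_of_ultra hsymm hultra x y)
  have hr : 0 ≤ d x y := ((hd0 x x).2 rfl).symm.trans_le (mem_uball.1 hxB)
  have h := kernel_fdiam_eq hsymm hultra hm (k := k) x _ ⟨x, d x y, hr, rfl⟩ hxB
  rwa [fdiam_uball hsymm hultra] at h

/-- For `x ≠ y` and `B = B(x, d(x,y))` the smallest ball containing
both, the kernel is determined by the eigenvalues and the measure:
`k(d(x,y)) = −λ(B)/m(B) + Σ_{B ⊆ T ⊊ X} (1/m(T) − 1/m(T⁺))·λ(T⁺)`. -/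
theorem stmt12 {X : Type*} [Fintype X] [DecidableEq X]
    (hX : 1 < Fintype.card X)
    (d : X → X → ℝ)
    (hd0 : ∀ x y, d x y = 0 ↔ x = y)
    (hsymm : ∀ x y, d x y = d y x)
    (hultra : ∀ x y z, d x z ≤ max (d x y) (d y z))
    (m : X → ℝ) (hm : ∀ x, 0 < m x) (k : ℝ → ℝ)
    (x y : X) (hxy : x ≠ y) :
    k (d x y) =
      -(lamB d k m (uball d x (d x y)) x) / mass m (uball d x (d x y)) +
      ∑ T ∈ Finset.univ.filter
          (fun T : Finset X => IsBall d T ∧ uball d x (d x y) ⊆ T ∧ T ≠ Finset.univ),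
        ((mass m T)⁻¹ - (mass m (parentB d T x))⁻¹) * lamB d k m (parentB d T x) x :=
  stmt12_general d hd0 hsymm hultra m hm k x y
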